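/- arXiv:1902.00198 — 3 statements merged into one kernel-verified Lean document; each statement's English description precedes it below -/
import Mathlib

section
/- (Revolute joint, Lemma 2) For any normalized twist ξ̄ = (ω, v) with ‖ω‖ = 1 and ωᵀv = 0 (zero pitch), there exist θ, d, α, a such that for all q, exp(ξ̂̄ q) = H · R_Z(q) · H⁻¹ with H = R_Z(θ)T_Z(d)R_X(α)T_X(a). -/
/-!
Conjugating the twist `twistM e₃ 0` of the `z`-axis by the rigid motion
`RZ θ * TZ d * RX α * TX a` gives the twist of the image axis: direction `ω = dhAxis θ α` and
moment `v = p × ω` for the point `p = dhOrigin θ d a` on it. Since `exp` commutes with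
conjugation and `exp (q • twistM e₃ 0) = RZ q`, it remains to choose the parameters. Write the
unit vector `ω` in spherical coordinates `(θ, α)`. If `sin α ≠ 0`, the pitch condition `ω ⬝ v = 0`
is exactly what lets `d` and `a` be solved for; if the axis is vertical, `θ` is free and is
re-chosen as the polar angle of the foot point `ω × v`.
-/

open Matrix Real

noncomputable section

/-- Skew-symmetric matrix of a 3-vector. -/
def skew (w : Fin 3 → ℝ) : Matrix (Fin 3) (Fin 3) ℝ :=
  !![0, -w 2, w 1; w 2, 0, -w 0; -w 1, w 0, 0]

/-- 4×4 twist matrix of twist coordinates (ω, v). -/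
def twistM (w v : Fin 3 → ℝ) : Matrix (Fin 4) (Fin 4) ℝ :=
  !![0, -w 2, w 1, v 0;
     w 2, 0, -w 0, v 1;
     -w 1, w 0, 0, v 2;
     0, 0, 0, 0]

/-- Homogeneous transformation [[R,t],[0,1]]. -/
def homog (R : Matrix (Fin 3) (Fin 3) ℝ) (t : Fin 3 → ℝ) : Matrix (Fin 4) (Fin 4) ℝ :=
  !![R 0 0, R 0 1, R 0 2, t 0;
     R 1 0, R 1 1, R 1 2, t 1;
     R 2 0, R 2 1, R 2 2, t 2;
     0, 0, 0, 1]

def isSO3 (R : Matrix (Fin 3) (Fin 3) ℝ) : Prop := R * Rᵀ = 1 ∧ R.det = 1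

def isSE3 (H : Matrix (Fin 4) (Fin 4) ℝ) : Prop :=
  ∃ R t, isSO3 R ∧ H = homog R t

def isTwist (X : Matrix (Fin 4) (Fin 4) ℝ) : Prop := ∃ w v, X = twistM w v

def RZ (θ : ℝ) : Matrix (Fin 4) (Fin 4) ℝ :=
  homog !![Real.cos θ, -Real.sin θ, 0; Real.sin θ, Real.cos θ, 0; 0, 0, 1] ![0, 0, 0]

def TZ (d : ℝ) : Matrix (Fin 4) (Fin 4) ℝ := homog 1 ![0, 0, d]

def RX (α : ℝ) : Matrix (Fin 4) (Fin 4) ℝ :=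
  homog !![1, 0, 0; 0, Real.cos α, -Real.sin α; 0, Real.sin α, Real.cos α] ![0, 0, 0]

def TX (a : ℝ) : Matrix (Fin 4) (Fin 4) ℝ := homog 1 ![a, 0, 0]

/-- `twistM e₃ 0` is the image of `(I, 0)`, so its exponential can be computed in `ℂ × ℝ`. -/
def complexRealBlockHom : ℂ × ℝ →+* Matrix (Fin 4) (Fin 4) ℝ where
  toFun p := !![p.1.re, -p.1.im, 0, 0; p.1.im, p.1.re, 0, 0; 0, 0, p.2, 0; 0, 0, 0, p.2]
  map_one' := by
    ext i j
    fin_cases i <;> fin_cases j <;> simp [one_apply]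
  map_mul' p q := by
    ext i j
    fin_cases i <;> fin_cases j <;> simp [mul_apply, Fin.sum_univ_four] <;> ring
  map_zero' := by
    ext i j
    fin_cases i <;> fin_cases j <;> simp
  map_add' p q := by
    ext i j
    fin_cases i <;> fin_cases j <;> simp [add_comm]

theorem continuous_complexRealBlockHom : Continuous complexRealBlockHom := by
  refine continuous_matrix fun i j => ?_
  fin_cases i <;> fin_cases j <;> simp [complexRealBlockHom] <;> fun_prop

theorem exp_smul_twistM_e₃ (q : ℝ) : NormedSpace.exp (q • twistM ![0, 0, 1] 0) = RZ q := by
  let : NormedRing (Matrix (Fin 4) (Fin 4) ℝ) := Matrix.linftyOpNormedRing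
  let : NormedAlgebra ℝ (Matrix (Fin 4) (Fin 4) ℝ) := Matrix.linftyOpNormedAlgebra
  have htwist : q • twistM ![0, 0, 1] 0 = complexRealBlockHom (q * Complex.I, 0) := by
    ext i j
    fin_cases i <;> fin_cases j <;> simp [complexRealBlockHom, twistM]
  have hexp : NormedSpace.exp ((q * Complex.I, 0) : ℂ × ℝ) = (Complex.exp (q * Complex.I), 1) := by
    ext
    · rw [Prod.fst_exp, ← Complex.exp_eq_exp_ℂ]
    · rw [Prod.snd_exp, NormedSpace.exp_zero]
  rw [htwist]
  refine (NormedSpace.map_exp _ continuous_complexRealBlockHom _).symm.trans ?_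
  rw [hexp]
  ext i j
  fin_cases i <;> fin_cases j <;>
    simp [complexRealBlockHom, RZ, homog, Complex.exp_ofReal_mul_I_re,
      Complex.exp_ofReal_mul_I_im]

def dhAxis (θ α : ℝ) : Fin 3 → ℝ := ![sin α * sin θ, -(sin α * cos θ), cos α]

def dhOrigin (θ d a : ℝ) : Fin 3 → ℝ := ![a * cos θ, a * sin θ, d]

def dhMatrix (θ d α a : ℝ) : Matrix (Fin 4) (Fin 4) ℝ :=
  !![cos θ, -(sin θ * cos α), sin θ * sin α, a * cos θ;
     sin θ, cos θ * cos α, -(cos θ * sin α), a * sin θ;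
     0, sin α, cos α, d;
     0, 0, 0, 1]

theorem RZ_mul_TZ_mul_RX_mul_TX (θ d α a : ℝ) :
    RZ θ * TZ d * RX α * TX a = dhMatrix θ d α a := by
  ext i j
  fin_cases i <;> fin_cases j <;>
    simp [RZ, TZ, RX, TX, dhMatrix, homog, mul_apply, Fin.sum_univ_four, one_apply] <;> ring

theorem det_dhMatrix (θ d α a : ℝ) : (dhMatrix θ d α a).det = 1 := by
  simp [dhMatrix, det_succ_row_zero, Fin.sum_univ_succ, Fin.succAbove]
  linear_combination (sin α ^ 2 + cos α ^ 2) * sin_sq_add_cos_sq θ + sin_sq_add_cos_sq α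

theorem dhMatrix_mul_twistM_e₃ (θ d α a : ℝ) :
    dhMatrix θ d α a * twistM ![0, 0, 1] 0 =
      twistM (dhAxis θ α) (dhOrigin θ d a ⨯₃ dhAxis θ α) * dhMatrix θ d α a := by
  have hθ := sin_sq_add_cos_sq θ
  have hα := sin_sq_add_cos_sq α
  ext i j
  fin_cases i <;> fin_cases j <;>
    simp [dhMatrix, twistM, dhAxis, dhOrigin, cross_apply, mul_apply, Fin.sum_univ_four] <;>
    first
      | ring1
      | linear_combination cos θ * hα
      | linear_combination sin θ * hα
      | linear_combination -sin α * hθ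

theorem exp_smul_twistM_dhAxis (θ d α a q : ℝ) :
    NormedSpace.exp (q • twistM (dhAxis θ α) (dhOrigin θ d a ⨯₃ dhAxis θ α)) =
      dhMatrix θ d α a * RZ q * (dhMatrix θ d α a)⁻¹ := by
  set K := dhMatrix θ d α a
  have hK : IsUnit K.det := by rw [det_dhMatrix]; exact isUnit_one
  have hconj : twistM (dhAxis θ α) (dhOrigin θ d a ⨯₃ dhAxis θ α) =
      K * twistM ![0, 0, 1] 0 * K⁻¹ := by
    rw [dhMatrix_mul_twistM_e₃, Matrix.mul_assoc, mul_nonsing_inv _ hK, Matrix.mul_one]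
  rw [hconj, ← Matrix.smul_mul, ← Matrix.mul_smul,
    exp_conj _ _ ((isUnit_iff_isUnit_det K).mpr hK), exp_smul_twistM_e₃]

theorem exists_polar (x y : ℝ) :
    ∃ θ : ℝ, √(x ^ 2 + y ^ 2) * cos θ = x ∧ √(x ^ 2 + y ^ 2) * sin θ = y := by
  have hnorm : ‖(⟨x, y⟩ : ℂ)‖ = √(x ^ 2 + y ^ 2) := by
    rw [Complex.norm_def, Complex.normSq_mk, sq, sq]
  exact ⟨Complex.arg ⟨x, y⟩, by simpa [hnorm] using Complex.norm_mul_cos_arg ⟨x, y⟩,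
    by simpa [hnorm] using Complex.norm_mul_sin_arg ⟨x, y⟩⟩

theorem exists_dhAxis_eq {ω : Fin 3 → ℝ} (hω : ω ⬝ᵥ ω = 1) : ∃ θ α, ω = dhAxis θ α := by
  obtain ⟨θ, hcos, hsin⟩ := exists_polar (-ω 1) (ω 0)
  set r := √((-ω 1) ^ 2 + ω 0 ^ 2) with hr
  obtain ⟨α, hcos', hsin'⟩ := exists_polar (ω 2) r
  have hunit : √(ω 2 ^ 2 + r ^ 2) = 1 := by
    rw [hr, sq_sqrt (by positivity), Real.sqrt_eq_one]
    simpa [vec3_dotProduct, sq, add_comm, add_left_comm] using hω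
  rw [hunit, one_mul] at hcos' hsin'
  refine ⟨θ, α, ?_⟩
  ext i; fin_cases i <;> simp [dhAxis, hsin', hcos', hcos, hsin]

theorem exists_dhOrigin_of_sin_ne_zero {θ α : ℝ} {v : Fin 3 → ℝ} (hα : sin α ≠ 0)
    (hpitch : dhAxis θ α ⬝ᵥ v = 0) : ∃ d a, v = dhOrigin θ d a ⨯₃ dhAxis θ α := by
  -- the moment of `dhOrigin θ d a` is
  -- `(a cos α sin θ + d sin α cos θ, d sin α sin θ - a cos α cos θ, -a sin α)`
  refine ⟨(cos θ * v 0 + sin θ * v 1) / sin α, -v 2 / sin α, ?_⟩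
  rw [vec3_dotProduct] at hpitch
  simp only [dhAxis, cons_val_zero, cons_val_one, cons_val, neg_mul] at hpitch
  have hθ := sin_sq_add_cos_sq θ
  ext i; fin_cases i <;> simp [dhOrigin, dhAxis, cross_apply] <;> field_simp
  · linear_combination (-v 0 * sin α) * hθ + sin θ * hpitch
  · linear_combination (-v 1 * sin α) * hθ - cos θ * hpitch
  · linear_combination (-v 2) * hθ

theorem exists_dhOrigin_of_sin_eq_zero {θ α : ℝ} {v : Fin 3 → ℝ} (hα : sin α = 0)
    (hpitch : dhAxis θ α ⬝ᵥ v = 0) : ∃ θ' a, v = dhOrigin θ' 0 a ⨯₃ dhAxis θ' α := by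
  have hcos : cos α ^ 2 = 1 := by nlinarith [sin_sq_add_cos_sq α]
  have hv2 : v 2 = 0 := by
    rw [vec3_dotProduct] at hpitch
    simp only [dhAxis, hα, zero_mul, neg_zero, cons_val_zero, cons_val_one, cons_val, zero_add,
      mul_eq_zero] at hpitch
    exact hpitch.resolve_left fun h => by simp [h] at hcos
  obtain ⟨θ', hc, hs⟩ := exists_polar (-(cos α * v 1)) (cos α * v 0)
  set r := √((-(cos α * v 1)) ^ 2 + (cos α * v 0) ^ 2)
  refine ⟨θ', r, ?_⟩
  ext i; fin_cases i <;> simp [dhOrigin, dhAxis, cross_apply, hα, hv2]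
  · linear_combination -cos α * hs - v 0 * hcos
  · linear_combination cos α * hc - v 1 * hcos

theorem exists_dh_params {ω v : Fin 3 → ℝ} (hω : ω ⬝ᵥ ω = 1) (hpitch : ω ⬝ᵥ v = 0) :
    ∃ θ d α a, ω = dhAxis θ α ∧ v = dhOrigin θ d a ⨯₃ ω := by
  obtain ⟨θ₀, α, rfl⟩ := exists_dhAxis_eq hω
  by_cases hα : sin α = 0
  · obtain ⟨θ, a, hv⟩ := exists_dhOrigin_of_sin_eq_zero hα hpitch
    have hθ : dhAxis θ₀ α = dhAxis θ α := by simp [dhAxis, hα]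
    exact ⟨θ, 0, α, a, hθ, by rw [hθ]; exact hv⟩
  · obtain ⟨d, a, hv⟩ := exists_dhOrigin_of_sin_ne_zero hα hpitch
    exact ⟨θ₀, d, α, a, rfl, hv⟩

/-- Lemma 2: D-H parameterization of a revolute joint twist. -/
theorem revolute_joint_DH (ω v : Fin 3 → ℝ)
    (hω : Real.sqrt (ω 0 ^ 2 + ω 1 ^ 2 + ω 2 ^ 2) = 1)
    (hpitch : ω ⬝ᵥ v = 0) :
    ∃ θ d α a : ℝ,
      ∀ q : ℝ,
        NormedSpace.exp (q • twistM ω v) =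
          (RZ θ * TZ d * RX α * TX a) * RZ q * (RZ θ * TZ d * RX α * TX a)⁻¹ := by
  have hunit : ω ⬝ᵥ ω = 1 := by
    rw [Real.sqrt_eq_one] at hω
    simpa [vec3_dotProduct, sq] using hω
  obtain ⟨θ, d, α, a, rfl, rfl⟩ := exists_dh_params hunit hpitch
  exact ⟨θ, d, α, a, fun q => by rw [RZ_mul_TZ_mul_RX_mul_TX, exp_smul_twistM_dhAxis]⟩
end
end

section
/- (Prismatic joint, Lemma 3) For any normalized twist ξ̄ = (0, v) with ‖v‖ = 1, there exist θ, d, α, a such that for all q, exp(ξ̂̄ q) = H · T_Z(q) · H⁻¹ with H = R_Z(θ)T_Z(d)R_X(α)T_X(a). In fact one may take d = a = 0. -/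
open Matrix Real

noncomputable section

/-! A pure translation twist squares to zero, so `exp (q ξ̂)` is the translation by `q • v`.
Conjugating `T_Z q` by a rotation `R` gives the translation by `q • R e_z`; for
`R = R_Z θ R_X α` this is `q • (sin θ sin α, -cos θ sin α, cos α)`, and every unit vector
has this form (spherical coordinates). -/

theorem NormedSpace.exp_eq_sum_range_of_pow_eq_zero {𝔸 : Type*} [Ring 𝔸] [Algebra ℚ 𝔸]
    [TopologicalSpace 𝔸] [IsTopologicalRing 𝔸] {x : 𝔸} {k : ℕ} (h : x ^ k = 0) :
    NormedSpace.exp x = ∑ n ∈ Finset.range k, (n.factorial⁻¹ : ℚ) • x ^ n := by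
  rw [NormedSpace.exp_eq_tsum_rat]
  exact tsum_eq_sum fun n hn => by
    rw [pow_eq_zero_of_le (by simpa using hn) h, smul_zero]

theorem NormedSpace.exp_eq_one_add_of_sq_eq_zero {𝔸 : Type*} [Ring 𝔸] [Algebra ℚ 𝔸]
    [TopologicalSpace 𝔸] [IsTopologicalRing 𝔸] {x : 𝔸} (h : x ^ 2 = 0) :
    NormedSpace.exp x = 1 + x := by
  simp [NormedSpace.exp_eq_sum_range_of_pow_eq_zero h, Finset.sum_range_succ]

theorem sq_smul_twistM_zero (q : ℝ) (v : Fin 3 → ℝ) : (q • twistM 0 v) ^ 2 = 0 := by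
  ext i j
  fin_cases i <;> fin_cases j <;> simp [twistM, sq, Matrix.mul_apply, Fin.sum_univ_succ]

theorem one_add_smul_twistM_zero (q : ℝ) (v : Fin 3 → ℝ) :
    1 + q • twistM 0 v = homog 1 (q • v) := by
  ext i j
  fin_cases i <;> fin_cases j <;> simp [twistM, homog]

theorem homog_mul_homog (R R' : Matrix (Fin 3) (Fin 3) ℝ) (t t' : Fin 3 → ℝ) :
    homog R t * homog R' t' = homog (R * R') (R *ᵥ t' + t) := by
  ext i j
  fin_cases i <;> fin_cases j <;>
    simp [homog, Matrix.mul_apply, Fin.sum_univ_succ, Matrix.mulVec, dotProduct] <;> ring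

theorem homog_one_zero : homog 1 0 = 1 := by
  ext i j
  fin_cases i <;> fin_cases j <;> simp [homog]

theorem homog_mul_translation_mul_inv {R : Matrix (Fin 3) (Fin 3) ℝ}
    (hR : R ∈ orthogonalGroup (Fin 3) ℝ) (t : Fin 3 → ℝ) :
    homog R 0 * homog 1 t * (homog R 0)⁻¹ = homog 1 (R *ᵥ t) := by
  have hRRt : R * Rᵀ = 1 := (mem_orthogonalGroup_iff (Fin 3) ℝ).mp hR
  have hinv : (homog R 0)⁻¹ = homog Rᵀ 0 := by
    refine inv_eq_right_inv ?_
    rw [homog_mul_homog, hRRt, mulVec_zero, add_zero, homog_one_zero]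
  rw [hinv, homog_mul_homog, homog_mul_homog, mul_one, hRRt, mulVec_zero, zero_add, add_zero]

def rotZ (θ : ℝ) : Matrix (Fin 3) (Fin 3) ℝ :=
  !![Real.cos θ, -Real.sin θ, 0; Real.sin θ, Real.cos θ, 0; 0, 0, 1]

def rotX (α : ℝ) : Matrix (Fin 3) (Fin 3) ℝ :=
  !![1, 0, 0; 0, Real.cos α, -Real.sin α; 0, Real.sin α, Real.cos α]

theorem RZ_eq_homog (θ : ℝ) : RZ θ = homog (rotZ θ) 0 := by
  rw [RZ, rotZ, ← zero_empty, cons_zero_zero, cons_zero_zero, cons_zero_zero]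

theorem RX_eq_homog (α : ℝ) : RX α = homog (rotX α) 0 := by
  rw [RX, rotX, ← zero_empty, cons_zero_zero, cons_zero_zero, cons_zero_zero]

theorem TZ_zero : TZ 0 = 1 := by
  rw [TZ, ← zero_empty, cons_zero_zero, cons_zero_zero, cons_zero_zero, homog_one_zero]

theorem TX_zero : TX 0 = 1 := by
  rw [TX, ← zero_empty, cons_zero_zero, cons_zero_zero, cons_zero_zero, homog_one_zero]

theorem rotZ_mem_orthogonalGroup (θ : ℝ) : rotZ θ ∈ orthogonalGroup (Fin 3) ℝ := by
  rw [mem_orthogonalGroup_iff]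
  ext i j
  fin_cases i <;> fin_cases j <;>
    simp [rotZ, Matrix.mul_apply, Fin.sum_univ_succ, ← sq, mul_comm]

theorem rotX_mem_orthogonalGroup (α : ℝ) : rotX α ∈ orthogonalGroup (Fin 3) ℝ := by
  rw [mem_orthogonalGroup_iff]
  ext i j
  fin_cases i <;> fin_cases j <;>
    simp [rotX, Matrix.mul_apply, Fin.sum_univ_succ, ← sq, mul_comm]

theorem rotZ_mul_rotX_mulVec_ez (θ α q : ℝ) :
    (rotZ θ * rotX α) *ᵥ ![0, 0, q] = q • ![sin θ * sin α, -cos θ * sin α, cos α] := by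
  ext i
  fin_cases i <;>
    simp [rotZ, rotX, Matrix.mulVec, dotProduct, Fin.sum_univ_succ, Matrix.mul_apply] <;> ring

theorem exists_eq_spherical {v : Fin 3 → ℝ} (hv : v 0 ^ 2 + v 1 ^ 2 + v 2 ^ 2 = 1) :
    ∃ θ α : ℝ, v = ![sin θ * sin α, -cos θ * sin α, cos α] := by
  set z : ℂ := ⟨-v 1, v 0⟩
  have hsin : sin (arccos (v 2)) = ‖z‖ := by
    rw [sin_arccos, Complex.norm_eq_sqrt_sq_add_sq]
    congr 1
    simp only [z, even_two, Even.neg_pow]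
    linarith
  have hcos : cos (arccos (v 2)) = v 2 := cos_arccos (by nlinarith) (by nlinarith)
  refine ⟨Complex.arg z, arccos (v 2), ?_⟩
  ext i
  fin_cases i <;>
    simp [hsin, hcos, mul_comm, Complex.norm_mul_sin_arg, Complex.norm_mul_cos_arg, z]

/-- Lemma 3: D-H parameterization of a prismatic joint twist;
one may take d = a = 0. -/
theorem prismatic_joint_DH (v : Fin 3 → ℝ)
    (hv : Real.sqrt (v 0 ^ 2 + v 1 ^ 2 + v 2 ^ 2) = 1) :
    ∃ θ d α a : ℝ, d = 0 ∧ a = 0 ∧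
      ∀ q : ℝ,
        NormedSpace.exp (q • twistM 0 v) =
          (RZ θ * TZ d * RX α * TX a) * TZ q * (RZ θ * TZ d * RX α * TX a)⁻¹ := by
  obtain ⟨θ, α, rfl⟩ := exists_eq_spherical (Real.sqrt_eq_one.mp hv)
  refine ⟨θ, 0, α, 0, rfl, rfl, fun q => ?_⟩
  have hR : rotZ θ * rotX α ∈ orthogonalGroup (Fin 3) ℝ :=
    mul_mem (rotZ_mem_orthogonalGroup θ) (rotX_mem_orthogonalGroup α)
  rw [TZ_zero, TX_zero, mul_one, mul_one, RZ_eq_homog, RX_eq_homog, homog_mul_homog,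
    mulVec_zero, add_zero, TZ, homog_mul_translation_mul_inv hR, rotZ_mul_rotX_mulVec_ez,
    NormedSpace.exp_eq_one_add_of_sq_eq_zero (sq_smul_twistM_zero q _), one_add_smul_twistM_zero]
end
end

section
/- Suppose ω₃ = ±1 and ω₁ = ω₂ = 0 (unit vector ω̄ along ±z), and v = (v₁, v₂, v₃) with v₁² + v₂² allowed to be zero. Then with θ = atan2(v₁/ω₃, −v₂/ω₃), d = 0, α = arccos(ω₃), a = √(v₁² + v₂²), h = ω̄ᵀv, the transformation H = R_Z(θ)T_Z(d)R_X(α)T_X(a) satisfies Ad(H)·(0,0,1,0,0,h) = (ω̄, v). -/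
open Matrix Real

noncomputable section

/-- Two-argument arctangent: atan2 y x is the argument of the complex number x + y i. -/
def atan2 (y x : ℝ) : ℝ := Complex.arg (x + y * Complex.I)
/-- Rotation block of a 4×4 homogeneous transformation. -/
def rotOf (H : Matrix (Fin 4) (Fin 4) ℝ) : Matrix (Fin 3) (Fin 3) ℝ :=
  fun i j => H i.castSucc j.castSucc

/-- Translation column of a 4×4 homogeneous transformation. -/
def transOf (H : Matrix (Fin 4) (Fin 4) ℝ) : Fin 3 → ℝ :=
  fun i => H i.castSucc 3

/-- The adjoint action Ad(H) of a homogeneous transformation on twist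
coordinates (ω, v) ∈ ℝ³ × ℝ³, given by (Rω, t̂Rω + Rv). -/
def AdAct (H : Matrix (Fin 4) (Fin 4) ℝ) (ξ : (Fin 3 → ℝ) × (Fin 3 → ℝ)) :
    (Fin 3 → ℝ) × (Fin 3 → ℝ) :=
  (rotOf H *ᵥ ξ.1, skew (transOf H) *ᵥ (rotOf H *ᵥ ξ.1) + rotOf H *ᵥ ξ.2)

lemma sqrt_mul_cos_atan2 (y x : ℝ) :
    Real.sqrt (x ^ 2 + y ^ 2) * Real.cos (atan2 y x) = x := by
  unfold atan2
  rcases eq_or_ne ((x : ℂ) + y * Complex.I) 0 with h | h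
  · have hx : x = 0 := by simpa using congrArg Complex.re h
    have hy : y = 0 := by simpa using congrArg Complex.im h
    simp [hx, hy]
  · have habs : ‖(x : ℂ) + y * Complex.I‖ = Real.sqrt (x ^ 2 + y ^ 2) := by
      simpa using Complex.norm_add_mul_I x y
    have hc := Complex.cos_arg h
    simp only [Complex.add_re, Complex.ofReal_re, Complex.mul_re, Complex.ofReal_im,
      Complex.I_re, Complex.I_im] at hc
    rw [hc, habs]
    have hne : Real.sqrt (x ^ 2 + y ^ 2) ≠ 0 := by
      rw [← habs]; simpa using h
    field_simp
    ring

lemma sqrt_mul_sin_atan2 (y x : ℝ) :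
    Real.sqrt (x ^ 2 + y ^ 2) * Real.sin (atan2 y x) = y := by
  unfold atan2
  have habs : ‖(x : ℂ) + y * Complex.I‖ = Real.sqrt (x ^ 2 + y ^ 2) := by
    simpa using Complex.norm_add_mul_I x y
  rcases eq_or_ne ((x : ℂ) + y * Complex.I) 0 with h | h
  · have hy : y = 0 := by simpa using congrArg Complex.im h
    have hx : x = 0 := by simpa using congrArg Complex.re h
    simp [hx, hy]
  · have hs := Complex.sin_arg ((x : ℂ) + y * Complex.I)
    simp only [Complex.add_im, Complex.ofReal_im, Complex.mul_im, Complex.ofReal_re,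
      Complex.I_re, Complex.I_im] at hs
    rw [hs, habs]
    have hne : Real.sqrt (x ^ 2 + y ^ 2) ≠ 0 := by
      rw [← habs]; simpa using h
    field_simp
    ring


lemma homog_mul (R S : Matrix (Fin 3) (Fin 3) ℝ) (t u : Fin 3 → ℝ) :
    homog R t * homog S u = homog (R * S) (R *ᵥ u + t) := by
  ext i j
  fin_cases i <;> fin_cases j <;>
    simp [homog, Matrix.mul_apply, Matrix.mulVec, dotProduct, Fin.sum_univ_succ] <;> ring

lemma rotOf_homog (R : Matrix (Fin 3) (Fin 3) ℝ) (t : Fin 3 → ℝ) :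
    rotOf (homog R t) = R := by
  ext i j
  fin_cases i <;> fin_cases j <;> simp [rotOf, homog] <;> rfl

lemma transOf_homog (R : Matrix (Fin 3) (Fin 3) ℝ) (t : Fin 3 → ℝ) :
    transOf (homog R t) = t := by
  ext i
  fin_cases i <;> simp [transOf, homog] <;> rfl

/-- explicit D-H solution when the axis is along ±z (ω₃ = ±1). -/
theorem dh_solution_axis_along_z (ω3 : ℝ) (hω3 : ω3 = 1 ∨ ω3 = -1)
    (v : Fin 3 → ℝ) :
    AdAct (RZ (atan2 (v 0 / ω3) (-(v 1) / ω3)) * TZ 0 * RX (Real.arccos ω3) *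
        TX (Real.sqrt (v 0 ^ 2 + v 1 ^ 2)))
      (![0, 0, 1], ![0, 0, (![0, 0, ω3] : Fin 3 → ℝ) ⬝ᵥ v]) =
    (![0, 0, ω3], v) := by
  rcases hω3 with h | h <;> subst h <;>
    [ (have hc := sqrt_mul_cos_atan2 (v 0) (-(v 1));
       have hs := sqrt_mul_sin_atan2 (v 0) (-(v 1));
       rw [show (-(v 1)) ^ 2 + (v 0) ^ 2 = v 0 ^ 2 + v 1 ^ 2 by ring] at hc hs);
      (have hc := sqrt_mul_cos_atan2 (-(v 0)) (v 1);
       have hs := sqrt_mul_sin_atan2 (-(v 0)) (v 1);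
       rw [show (v 1) ^ 2 + (-(v 0)) ^ 2 = v 0 ^ 2 + v 1 ^ 2 by ring] at hc hs)] <;>
  · rw [RZ, TZ, RX, TX, homog_mul, homog_mul, homog_mul, AdAct, rotOf_homog, transOf_homog]
    refine Prod.ext ?_ ?_ <;> funext i <;> fin_cases i <;>
      simp [skew, Matrix.mul_apply, Matrix.mulVec, dotProduct, Fin.sum_univ_succ,
        Real.arccos_one, Real.arccos_neg_one, div_neg, neg_div] <;>
      nlinarith [hc, hs, Real.sin_sq_add_cos_sq (atan2 (v 0 / 1) (-v 1 / 1)),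
        Real.sin_sq_add_cos_sq (atan2 (v 0 / (-1)) (-v 1 / (-1)))]
end
end
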